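/- arXiv:2405.15368 — 4 statements merged into one kernel-verified Lean document; each statement's English description precedes it below -/
import Mathlib

section
/- Let k ≤ n and H ∈ ℤ^{k×n} be an integer matrix of rank k. Then σ_max(H) ≤ n·‖H‖_max and σ_min(H) ≥ n^{-(n-1)}·‖H‖_max^{-(n-1)}, where ‖H‖_max = max_{i,j}|H_{ij}| is the maximum absolute value of an entry of H. -/
/-!
Let `A` be `H` viewed as a real matrix, `M = ‖H‖_max`, and `B = A Aᵀ`. For a unit vector `y`,
`‖Aᵀ y‖² = ⟪y, B y⟫` lies between the smallest and the largest eigenvalue of the positive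
semidefinite matrix `B`. Every eigenvalue of `B` is at most `tr B = ∑ A_ij² ≤ k n M² ≤ (n M)²`,
which gives the upper bound. Since `B = H Hᵀ` is an integer matrix of rank `k`, `det B` is a
positive integer, so `1 ≤ det B = λ_i ∏_{j ≠ i} λ_j ≤ λ_i (n M)^(2(k-1))` for every eigenvalue
`λ_i`, which gives the lower bound.
-/

open Matrix

theorem Finset.prod_le_mul_pow_card_sub_one {ι R : Type*} [Fintype ι] [CommSemiring R]
    [PartialOrder R] [IsOrderedRing R] {f : ι → R} {t : R}
    (h0 : ∀ j, 0 ≤ f j) (ht : ∀ j, f j ≤ t) (i : ι) :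
    ∏ j, f j ≤ f i * t ^ (Fintype.card ι - 1) := by
  classical
  rw [← Finset.mul_prod_erase _ _ (Finset.mem_univ i)]
  refine mul_le_mul_of_nonneg_left ?_ (h0 i)
  calc ∏ j ∈ Finset.univ.erase i, f j ≤ ∏ _j ∈ Finset.univ.erase i, t :=
        Finset.prod_le_prod (fun j _ => h0 j) (fun j _ => ht j)
    _ = t ^ (Fintype.card ι - 1) := by
        rw [Finset.prod_const, Finset.card_erase_of_mem (Finset.mem_univ i), Finset.card_univ]

namespace Matrix

variable {𝕜 m n : Type*} [RCLike 𝕜] [Fintype m] [Fintype n]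

section Hermitian

variable [DecidableEq n] {B : Matrix n n 𝕜} (hB : B.IsHermitian)

theorem IsHermitian.re_inner_toEuclideanLin_self (y : EuclideanSpace 𝕜 n) :
    RCLike.re (inner 𝕜 y (toEuclideanLin B y)) =
      ∑ i, hB.eigenvalues i * ‖inner 𝕜 (hB.eigenvectorBasis i) y‖ ^ 2 := by
  set b := hB.eigenvectorBasis
  have hb (i : n) : toEuclideanLin B (b i) = (hB.eigenvalues i : 𝕜) • b i := by
    apply WithLp.ofLp_injective
    rw [ofLp_toLpLin, WithLp.ofLp_smul, ← RCLike.real_smul_eq_coe_smul]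
    exact hB.mulVec_eigenvectorBasis i
  rw [← b.sum_inner_mul_inner, map_sum]
  refine Finset.sum_congr rfl fun i _ => ?_
  rw [← isSymmetric_toEuclideanLin_iff.mpr hB, hb, inner_smul_left, RCLike.conj_ofReal,
    ← inner_conj_symm y, mul_left_comm, RCLike.conj_mul]
  norm_cast

theorem IsHermitian.mul_norm_sq_le_re_inner {a : ℝ} (ha : ∀ i, a ≤ hB.eigenvalues i)
    (y : EuclideanSpace 𝕜 n) :
    a * ‖y‖ ^ 2 ≤ RCLike.re (inner 𝕜 y (toEuclideanLin B y)) := by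
  rw [hB.re_inner_toEuclideanLin_self, ← hB.eigenvectorBasis.sum_sq_norm_inner_right y,
    Finset.mul_sum]
  gcongr with i
  exact ha i

theorem IsHermitian.re_inner_le_mul_norm_sq {c : ℝ} (hc : ∀ i, hB.eigenvalues i ≤ c)
    (y : EuclideanSpace 𝕜 n) :
    RCLike.re (inner 𝕜 y (toEuclideanLin B y)) ≤ c * ‖y‖ ^ 2 := by
  rw [hB.re_inner_toEuclideanLin_self, ← hB.eigenvectorBasis.sum_sq_norm_inner_right y,
    Finset.mul_sum]
  gcongr with i
  exact hc i

end Hermitian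

theorem IsHermitian.det_ne_zero_of_rank_eq_card [DecidableEq n] {B : Matrix n n 𝕜}
    (hB : B.IsHermitian) (hrank : B.rank = Fintype.card n) : B.det ≠ 0 := by
  rw [hB.det_eq_prod_eigenvalues, Finset.prod_ne_zero_iff]
  intro i _ hi
  have hlt := Fintype.card_subtype_lt (p := fun j => hB.eigenvalues j ≠ 0) (x := i)
    (by simpa using hi)
  rw [← hB.rank_eq_card_non_zero_eigs, hrank] at hlt
  exact hlt.false

theorem norm_toEuclideanLin_conjTranspose_sq [DecidableEq m] [DecidableEq n] (A : Matrix m n 𝕜)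
    (y : EuclideanSpace 𝕜 m) :
    ‖toEuclideanLin Aᴴ y‖ ^ 2 = RCLike.re (inner 𝕜 y (toEuclideanLin (A * Aᴴ) y)) := by
  rw [toLpLin_mul_same, LinearMap.comp_apply, toEuclideanLin_conjTranspose_eq_adjoint,
    ← LinearMap.adjoint_inner_left, inner_self_eq_norm_sq]

section PosSemidef

variable [DecidableEq n] {B : Matrix n n ℝ} (hB : B.PosSemidef)

theorem PosSemidef.eigenvalues_le_trace (i : n) : hB.1.eigenvalues i ≤ B.trace := by
  rw [hB.1.trace_eq_sum_eigenvalues]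
  exact Finset.single_le_sum (fun j _ => hB.eigenvalues_nonneg j) (Finset.mem_univ i)

theorem PosSemidef.inv_pow_card_sub_one_le_eigenvalues (hdet : 1 ≤ B.det) {t : ℝ}
    (ht : ∀ i, hB.1.eigenvalues i ≤ t) (i : n) :
    (t ^ (Fintype.card n - 1))⁻¹ ≤ hB.1.eigenvalues i := by
  have hprod : 1 ≤ hB.1.eigenvalues i * t ^ (Fintype.card n - 1) := by
    refine hdet.trans ?_
    simpa [hB.1.det_eq_prod_eigenvalues] using
      Finset.prod_le_mul_pow_card_sub_one hB.eigenvalues_nonneg ht i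
  rcases (pow_nonneg ((hB.eigenvalues_nonneg i).trans (ht i)) (Fintype.card n - 1)).eq_or_lt
    with h0 | hpos
  · simpa [← h0] using hB.eigenvalues_nonneg i
  · rwa [inv_le_iff_one_le_mul₀ hpos]

end PosSemidef

theorem trace_mul_transpose_le {A : Matrix m n ℝ} {M : ℝ} (hA : ∀ i j, |A i j| ≤ M) :
    (A * Aᵀ).trace ≤ Fintype.card m * Fintype.card n * M ^ 2 :=
  calc (A * Aᵀ).trace = ∑ i, ∑ j, A i j ^ 2 := by simp [trace, mul_apply, sq]
    _ ≤ ∑ _i : m, ∑ _j : n, M ^ 2 := Finset.sum_le_sum fun i _ => Finset.sum_le_sum fun j _ =>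
        sq_le_sq' (abs_le.1 (hA i j)).1 (abs_le.1 (hA i j)).2
    _ = Fintype.card m * Fintype.card n * M ^ 2 := by simp [mul_assoc]

theorem one_le_det_mul_transpose_map_intCast [DecidableEq m] (H : Matrix m n ℤ)
    (hrank : (H.map (Int.cast : ℤ → ℝ)).rank = Fintype.card m) :
    1 ≤ (H.map (Int.cast : ℤ → ℝ) * (H.map (Int.cast : ℤ → ℝ))ᵀ).det := by
  set A := H.map (Int.cast : ℤ → ℝ)
  have hB := posSemidef_self_mul_conjTranspose A
  rw [conjTranspose_eq_transpose_of_trivial] at hB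
  have hpos : 0 < (A * Aᵀ).det := hB.det_nonneg.lt_of_ne' <|
    hB.1.det_ne_zero_of_rank_eq_card <| by
      rw [← conjTranspose_eq_transpose_of_trivial, rank_self_mul_conjTranspose, hrank]
  have hcast : (A * Aᵀ).det = ((H * Hᵀ).det : ℝ) := by
    rw [← eq_intCast (Int.castRingHom ℝ), RingHom.map_det, RingHom.mapMatrix_apply, Matrix.map_mul,
      transpose_map]
    rfl
  rw [hcast] at hpos ⊢
  exact_mod_cast (Int.cast_pos.mp hpos : 0 < (H * Hᵀ).det)

variable [DecidableEq m] [DecidableEq n]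

theorem norm_toEuclideanLin_transpose_sq_le {A : Matrix m n ℝ} {M : ℝ} (hA : ∀ i j, |A i j| ≤ M)
    (y : EuclideanSpace ℝ m) :
    ‖toEuclideanLin Aᵀ y‖ ^ 2 ≤ Fintype.card m * Fintype.card n * M ^ 2 * ‖y‖ ^ 2 := by
  have hB := posSemidef_self_mul_conjTranspose A
  rw [conjTranspose_eq_transpose_of_trivial] at hB
  simpa [conjTranspose_eq_transpose_of_trivial] using
    (norm_toEuclideanLin_conjTranspose_sq A y).trans_le <| hB.1.re_inner_le_mul_norm_sq
      (fun i => (hB.eigenvalues_le_trace i).trans (trace_mul_transpose_le hA)) y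

theorem inv_pow_mul_norm_sq_le_norm_toEuclideanLin_transpose_sq (H : Matrix m n ℤ)
    (hrank : (H.map (Int.cast : ℤ → ℝ)).rank = Fintype.card m) {M : ℝ}
    (hM : ∀ i j, |(H i j : ℝ)| ≤ M) (y : EuclideanSpace ℝ m) :
    ((Fintype.card m * Fintype.card n * M ^ 2) ^ (Fintype.card m - 1))⁻¹ * ‖y‖ ^ 2 ≤
      ‖toEuclideanLin (H.map (Int.cast : ℤ → ℝ))ᵀ y‖ ^ 2 := by
  set A := H.map (Int.cast : ℤ → ℝ)
  have hB := posSemidef_self_mul_conjTranspose A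
  rw [conjTranspose_eq_transpose_of_trivial] at hB
  have heig := hB.inv_pow_card_sub_one_le_eigenvalues
    (one_le_det_mul_transpose_map_intCast H hrank)
    fun i => (hB.eigenvalues_le_trace i).trans (trace_mul_transpose_le hM)
  simpa [conjTranspose_eq_transpose_of_trivial] using
    (hB.1.mul_norm_sq_le_re_inner heig y).trans_eq (norm_toEuclideanLin_conjTranspose_sq A y).symm

theorem norm_toEuclideanLin_transpose_le {A : Matrix m n ℝ} {M : ℝ} (hA : ∀ i j, |A i j| ≤ M)
    (hM : 0 ≤ M) (hmn : Fintype.card m ≤ Fintype.card n) (y : EuclideanSpace ℝ m) :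
    ‖toEuclideanLin Aᵀ y‖ ≤ Fintype.card n * M * ‖y‖ := by
  refine (pow_le_pow_iff_left₀ (norm_nonneg _) (by positivity) two_ne_zero).1
    ((norm_toEuclideanLin_transpose_sq_le hA y).trans ?_)
  calc _ ≤ (Fintype.card n * Fintype.card n * M ^ 2 * ‖y‖ ^ 2 : ℝ) := by gcongr
    _ = _ := by ring

theorem inv_pow_mul_norm_le_norm_toEuclideanLin_transpose [Nonempty m] (H : Matrix m n ℤ)
    (hrank : (H.map (Int.cast : ℤ → ℝ)).rank = Fintype.card m) {M : ℝ}
    (hM : ∀ i j, |(H i j : ℝ)| ≤ M) (hM0 : 0 < M) (hmn : Fintype.card m ≤ Fintype.card n)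
    (y : EuclideanSpace ℝ m) :
    ((Fintype.card n * M) ^ (Fintype.card m - 1))⁻¹ * ‖y‖ ≤
      ‖toEuclideanLin (H.map (Int.cast : ℤ → ℝ))ᵀ y‖ := by
  have hm : (0 : ℝ) < Fintype.card m := by exact_mod_cast Fintype.card_pos
  have hn : (0 : ℝ) < Fintype.card n := hm.trans_le (by exact_mod_cast hmn)
  refine (pow_le_pow_iff_left₀ (by positivity) (norm_nonneg _) two_ne_zero).1
    (le_trans ?_ (inv_pow_mul_norm_sq_le_norm_toEuclideanLin_transpose_sq H hrank hM y))
  have ht : (Fintype.card m * Fintype.card n * M ^ 2 : ℝ) ≤ (Fintype.card n * M) ^ 2 :=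
    calc (Fintype.card m * Fintype.card n * M ^ 2 : ℝ)
        ≤ Fintype.card n * Fintype.card n * M ^ 2 := by gcongr
      _ = (Fintype.card n * M) ^ 2 := by ring
  rw [mul_pow, inv_pow, ← pow_right_comm]
  gcongr

end Matrix

/-- `sSup S` and `sInf S` are `σ_max(H)` and `σ_min(H)`: as `H` has rank `k`, `Hᵀ` is injective
on `ℝ^k`. -/
theorem singular_value_bounds_int_matrix {k n : ℕ} (hk : 0 < k) (hkn : k ≤ n)
    (H : Matrix (Fin k) (Fin n) ℤ)
    (hrank : (H.map (Int.cast : ℤ → ℝ)).rank = k)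
    (S : Set ℝ)
    (hS : S = {r : ℝ | ∃ (y : EuclideanSpace ℝ (Fin k)), ‖y‖ = 1 ∧
      r = ‖Matrix.toEuclideanLin (H.map (Int.cast : ℤ → ℝ))ᵀ y‖})
    (Hmax : ℝ) (hHmax : Hmax = ⨆ i, ⨆ j, |(H i j : ℝ)|) :
    sSup S ≤ n * Hmax ∧
    (n : ℝ) ^ (-(n - 1 : ℤ)) * Hmax ^ (-(n - 1 : ℤ)) ≤ sInf S := by
  have hent (i j) : |(H i j : ℝ)| ≤ Hmax := hHmax ▸
    (Finite.le_ciSup (fun j => |(H i j : ℝ)|) j).trans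
      (Finite.le_ciSup (fun i => ⨆ j, |(H i j : ℝ)|) i)
  have hHmax1 : 1 ≤ Hmax := by
    obtain ⟨i, j, hij⟩ : ∃ i j, H i j ≠ 0 := by
      by_contra! h
      have : H.map (Int.cast : ℤ → ℝ) = 0 := by ext i j; simp [h i j]
      rw [this, rank_zero] at hrank
      omega
    exact (by exact_mod_cast Int.one_le_abs hij : (1 : ℝ) ≤ |(H i j : ℝ)|).trans (hent i j)
  have hcard : Fintype.card (Fin k) ≤ Fintype.card (Fin n) := by simpa using hkn
  subst hS
  refine ⟨Real.sSup_le ?_ (by positivity),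
    le_csInf ⟨_, EuclideanSpace.single ⟨0, hk⟩ 1, by simp, rfl⟩ ?_⟩
  all_goals rintro _ ⟨y, hy, rfl⟩
  · simpa [hy] using norm_toEuclideanLin_transpose_le (A := H.map (Int.cast : ℤ → ℝ)) hent
      (by positivity) hcard y
  · have : Nonempty (Fin k) := ⟨⟨0, hk⟩⟩
    have hlow := inv_pow_mul_norm_le_norm_toEuclideanLin_transpose H (by simpa using hrank) hent
      (by positivity) hcard y
    simp only [Fintype.card_fin, hy, mul_one] at hlow
    have hexp : (-(n - 1 : ℤ)) = -((n - 1 : ℕ) : ℤ) := by omega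
    rw [← mul_zpow, hexp, _root_.zpow_neg, zpow_natCast]
    have hs : 1 ≤ (n : ℝ) * Hmax :=
      one_le_mul_of_one_le_of_one_le (by exact_mod_cast hk.trans_le hkn) hHmax1
    refine le_trans ?_ hlow
    gcongr
end

section
/- Let r, R be real numbers with 0 < r ≤ R, and let v, w be nonzero complex numbers with r ≤ |v| ≤ R and r ≤ |w| ≤ R. Write v = e^ρ e^{iθ} and w = e^τ e^{iφ} with ρ, τ ∈ ℝ and θ, φ ∈ ℝ. Then (4r²/π²)·((ρ−τ)² + dist(θ−φ, 2πℤ)²) ≤ |v − w|² ≤ R²·((ρ−τ)² + dist(θ−φ, 2πℤ)²). -/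
/-!
By the law of cosines, `|v − w|² = (e^ρ − e^τ)² + e^ρ e^τ · 2(1 − cos(θ − φ))`. Both summands are
squeezed separately: `e^x ≥ 1 + x` (a mean value bound for `exp`) gives
`r|ρ − τ| ≤ |e^ρ − e^τ| ≤ R|ρ − τ|`, and since `cos(θ − φ) = cos d` with `d` the distance of
`θ − φ` to `2πℤ` and `|d| ≤ π`, the bounds `(4/π²) d² ≤ 2(1 − cos d) ≤ d²` hold. The distance to
`2πℤ` is the norm on `AddCircle (2π)`, which supplies both the minimiser and the bound `d ≤ π`.
-/

open Real

lemma sInf_abs_sub_mul_int_eq_norm_addCircle (c x : ℝ) :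
    sInf {d : ℝ | ∃ m : ℤ, d = |x - c * m|} = ‖(x : AddCircle c)‖ := by
  apply le_antisymm
  · have hround : ‖(x : AddCircle c)‖ = |x - c * round (c⁻¹ * x)| := by
      rw [AddCircle.norm_eq, mul_comm c]
    rw [hround]
    exact csInf_le ⟨0, by rintro _ ⟨m, rfl⟩; exact abs_nonneg _⟩ ⟨_, rfl⟩
  · refine le_csInf ⟨_, 0, rfl⟩ ?_
    rintro _ ⟨m, rfl⟩
    have hshift : ((x - c * m : ℝ) : AddCircle c) = x := by
      rw [AddCircle.coe_sub, mul_comm, ← zsmul_eq_mul, AddCircle.coe_zsmul, AddCircle.coe_period,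
        smul_zero, sub_zero]
    rw [← hshift, ← Real.norm_eq_abs]
    exact QuotientAddGroup.norm_mk_le_norm

lemma cos_norm_coe_addCircle_two_pi (x : ℝ) : cos ‖(x : AddCircle (2 * π))‖ = cos x := by
  rw [AddCircle.norm_eq, cos_abs, cos_sub_int_mul_two_pi]

lemma mul_abs_sub_le_abs_exp_sub_exp {r p q : ℝ} (hp : r ≤ exp p) (hq : r ≤ exp q) :
    r * |p - q| ≤ |exp p - exp q| := by
  wlog hqp : q ≤ p generalizing p q
  · rw [abs_sub_comm p, abs_sub_comm (exp p)]
    exact this hq hp (le_of_not_ge hqp)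
  have hexp : exp p - exp q = exp q * (exp (p - q) - 1) := by
    rw [mul_sub, ← exp_add, add_sub_cancel, mul_one]
  rw [abs_of_nonneg (sub_nonneg.2 hqp), abs_of_nonneg (sub_nonneg.2 (exp_le_exp.2 hqp)), hexp]
  have := add_one_le_exp (p - q)
  nlinarith [exp_pos q]

lemma abs_exp_sub_exp_le_mul_abs_sub {R p q : ℝ} (hp : exp p ≤ R) (hq : exp q ≤ R) :
    |exp p - exp q| ≤ R * |p - q| := by
  wlog hqp : q ≤ p generalizing p q
  · rw [abs_sub_comm p, abs_sub_comm (exp p)]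
    exact this hq hp (le_of_not_ge hqp)
  have hexp : exp p - exp q = exp p * (1 - exp (q - p)) := by
    rw [mul_sub, ← exp_add, add_sub_cancel, mul_one]
  rw [abs_of_nonneg (sub_nonneg.2 hqp), abs_of_nonneg (sub_nonneg.2 (exp_le_exp.2 hqp)), hexp]
  have := add_one_le_exp (q - p)
  nlinarith [exp_pos p]

lemma mul_sq_le_two_mul_one_sub_cos {x : ℝ} (hx : |x| ≤ π) : 4 / π ^ 2 * x ^ 2 ≤ 2 * (1 - cos x) :=
  calc 4 / π ^ 2 * x ^ 2 = 2 * (2 / π ^ 2 * x ^ 2) := by ring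
    _ ≤ 2 * (1 - cos x) := by linarith [cos_le_one_sub_mul_cos_sq hx]

lemma two_mul_one_sub_cos_le_sq (x : ℝ) : 2 * (1 - cos x) ≤ x ^ 2 := by
  linarith [one_sub_sq_div_two_le_cos (x := x)]

lemma norm_ofReal_mul_exp_sub_sq (a b θ φ : ℝ) :
    ‖(a : ℂ) * Complex.exp (θ * Complex.I) - b * Complex.exp (φ * Complex.I)‖ ^ 2 =
      (a - b) ^ 2 + a * b * (2 * (1 - cos (θ - φ))) := by
  rw [Complex.sq_norm, Complex.exp_mul_I, Complex.exp_mul_I, ← Complex.ofReal_cos,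
    ← Complex.ofReal_sin, ← Complex.ofReal_cos, ← Complex.ofReal_sin, Complex.normSq_apply]
  simp only [Complex.sub_re, Complex.sub_im, Complex.mul_re, Complex.mul_im, Complex.add_re,
    Complex.add_im, Complex.ofReal_re, Complex.ofReal_im, Complex.I_re, Complex.I_im]
  rw [cos_sub]
  linear_combination a ^ 2 * sin_sq_add_cos_sq θ + b ^ 2 * sin_sq_add_cos_sq φ

section Polar

variable {ρ τ θ φ d : ℝ}

lemma le_norm_polar_sub_sq {r : ℝ} (hr : 0 ≤ r) (hρ : r ≤ exp ρ) (hτ : r ≤ exp τ) (hd : |d| ≤ π)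
    (hcos : cos (θ - φ) = cos d) :
    4 * r ^ 2 / π ^ 2 * ((ρ - τ) ^ 2 + d ^ 2) ≤
      ‖(exp ρ : ℂ) * Complex.exp (θ * Complex.I) - exp τ * Complex.exp (φ * Complex.I)‖ ^ 2 := by
  rw [norm_ofReal_mul_exp_sub_sq, hcos]
  have hexp : r ^ 2 * (ρ - τ) ^ 2 ≤ (exp ρ - exp τ) ^ 2 := by
    simpa only [mul_pow, sq_abs] using
      pow_le_pow_left₀ (by positivity) (mul_abs_sub_le_abs_exp_sub_exp hρ hτ) 2
  have hprod : r ^ 2 ≤ exp ρ * exp τ := by rw [sq]; exact mul_le_mul hρ hτ hr (exp_pos ρ).le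
  have hcos_lower := mul_sq_le_two_mul_one_sub_cos hd
  have hfour : 4 / π ^ 2 ≤ 1 := by
    rw [div_le_one (by positivity)]
    nlinarith [pi_gt_three]
  calc 4 * r ^ 2 / π ^ 2 * ((ρ - τ) ^ 2 + d ^ 2)
      = 4 / π ^ 2 * (r ^ 2 * (ρ - τ) ^ 2) + r ^ 2 * (4 / π ^ 2 * d ^ 2) := by ring
    _ ≤ 1 * (exp ρ - exp τ) ^ 2 + exp ρ * exp τ * (2 * (1 - cos d)) := by gcongr
    _ = _ := by rw [one_mul]

lemma norm_polar_sub_sq_le {R : ℝ} (hρ : exp ρ ≤ R) (hτ : exp τ ≤ R) (hcos : cos (θ - φ) = cos d) :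
    ‖(exp ρ : ℂ) * Complex.exp (θ * Complex.I) - exp τ * Complex.exp (φ * Complex.I)‖ ^ 2 ≤
      R ^ 2 * ((ρ - τ) ^ 2 + d ^ 2) := by
  rw [norm_ofReal_mul_exp_sub_sq, hcos]
  have hexp : (exp ρ - exp τ) ^ 2 ≤ R ^ 2 * (ρ - τ) ^ 2 := by
    simpa only [mul_pow, sq_abs] using
      pow_le_pow_left₀ (abs_nonneg _) (abs_exp_sub_exp_le_mul_abs_sub hρ hτ) 2
  have hprod : exp ρ * exp τ ≤ R ^ 2 := by
    rw [sq]; exact mul_le_mul hρ hτ (exp_pos τ).le ((exp_pos ρ).le.trans hρ)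
  have hone_sub_cos : 0 ≤ 2 * (1 - cos d) := by linarith [cos_le_one d]
  calc (exp ρ - exp τ) ^ 2 + exp ρ * exp τ * (2 * (1 - cos d))
      ≤ R ^ 2 * (ρ - τ) ^ 2 + R ^ 2 * d ^ 2 :=
        add_le_add hexp (mul_le_mul hprod (two_mul_one_sub_cos_le_sq d) hone_sub_cos (sq_nonneg R))
    _ = R ^ 2 * ((ρ - τ) ^ 2 + d ^ 2) := by ring

end Polar

theorem abs_sub_sq_bounds_polar_general (r R : ℝ) (hr : 0 < r)
    (v w : ℂ) (ρ τ θ φ : ℝ)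
    (hv : v = Real.exp ρ * Complex.exp (θ * Complex.I))
    (hw : w = Real.exp τ * Complex.exp (φ * Complex.I))
    (hv1 : r ≤ ‖v‖) (hv2 : ‖v‖ ≤ R)
    (hw1 : r ≤ ‖w‖) (hw2 : ‖w‖ ≤ R)
    (dθ : ℝ) (hdθ : dθ = sInf {d : ℝ | ∃ m : ℤ, d = |θ - φ - 2 * Real.pi * m|}) :
    4 * r ^ 2 / Real.pi ^ 2 * ((ρ - τ) ^ 2 + dθ ^ 2) ≤ ‖v - w‖ ^ 2 ∧
    ‖v - w‖ ^ 2 ≤ R ^ 2 * ((ρ - τ) ^ 2 + dθ ^ 2) := by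
  have hnorm (a x : ℝ) : ‖(exp a : ℂ) * Complex.exp (x * Complex.I)‖ = exp a := by
    rw [norm_mul, Complex.norm_exp_ofReal_mul_I, Complex.norm_real, norm_of_nonneg (exp_pos a).le,
      mul_one]
  rw [hv, hnorm] at hv1 hv2
  rw [hw, hnorm] at hw1 hw2
  rw [sInf_abs_sub_mul_int_eq_norm_addCircle] at hdθ
  have hdπ : |dθ| ≤ π := by
    rw [hdθ, abs_norm]
    simpa [abs_of_pos two_pi_pos] using AddCircle.norm_le_half_period (2 * π) two_pi_pos.ne'
  have hcos : cos (θ - φ) = cos dθ := by rw [hdθ, cos_norm_coe_addCircle_two_pi]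
  rw [hv, hw]
  exact ⟨le_norm_polar_sub_sq hr.le hv1 hw1 hdπ hcos, norm_polar_sub_sq_le hv2 hw2 hcos⟩

/-- For `0 < r ≤ R` and nonzero complex numbers `v = e^ρ e^{iθ}`, `w = e^τ e^{iφ}` with
`r ≤ |v|, |w| ≤ R`:
`(4r²/π²)((ρ−τ)² + dist(θ−φ, 2πℤ)²) ≤ |v − w|² ≤ R²((ρ−τ)² + dist(θ−φ, 2πℤ)²)`. -/
theorem abs_sub_sq_bounds_polar (r R : ℝ) (hr : 0 < r) (hrR : r ≤ R)
    (v w : ℂ) (ρ τ θ φ : ℝ)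
    (hv : v = Real.exp ρ * Complex.exp (θ * Complex.I))
    (hw : w = Real.exp τ * Complex.exp (φ * Complex.I))
    (hv1 : r ≤ ‖v‖) (hv2 : ‖v‖ ≤ R)
    (hw1 : r ≤ ‖w‖) (hw2 : ‖w‖ ≤ R)
    (dθ : ℝ) (hdθ : dθ = sInf {d : ℝ | ∃ m : ℤ, d = |θ - φ - 2 * Real.pi * m|}) :
    4 * r ^ 2 / Real.pi ^ 2 * ((ρ - τ) ^ 2 + dθ ^ 2) ≤ ‖v - w‖ ^ 2 ∧
    ‖v - w‖ ^ 2 ≤ R ^ 2 * ((ρ - τ) ^ 2 + dθ ^ 2) :=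
  abs_sub_sq_bounds_polar_general r R hr v w ρ τ θ φ hv hw hv1 hv2 hw1 hw2 dθ hdθ
end

section
/- Let L ⊂ ℝ^m be a lattice generated by the columns of G ∈ ℤ^{m×m} with det G ≠ 0, let n ≥ m and s a positive integer. Suppose there exists L ∈ ℤ^{m×n} that is right-invertible over ℤ (i.e., L R = I_m for some R ∈ ℤ^{n×m}) and satisfies (GL)(GL)^T = s²·I_m. Then there exists a lattice L' ⊂ ℝ^n generated by an orthonormal basis of ℝ^n such that L = s·P(L'), where P : ℝ^n → ℝ^m is the orthogonal projection onto the first m coordinates. -/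
/-!
The rows of `X = s⁻¹ • G L` are orthonormal, so they extend to the rows of an orthogonal
matrix `Q`. Then `s • P (Q c) = G L c` for every `c ∈ ℤⁿ`, and `L` maps `ℤⁿ` onto `ℤᵐ`
because it has an integral right inverse, so `s • P (Q ℤⁿ) = G (L ℤⁿ) = G ℤᵐ`.
-/

open Matrix

namespace Matrix

variable {ι κ 𝕜 : Type*} [RCLike 𝕜] [Fintype κ] [DecidableEq ι]

theorem orthonormal_toLp_rows_iff {X : Matrix ι κ 𝕜} :
    Orthonormal 𝕜 (fun i => WithLp.toLp 2 (X i)) ↔ X * Xᴴ = 1 := by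
  have hgram : gram 𝕜 (fun i => WithLp.toLp 2 (X i)) = (X * Xᴴ)ᵀ := by
    ext i j
    simp [EuclideanSpace.inner_toLp_toLp, mul_apply, dotProduct]
  rw [← gram_eq_one_iff_orthonormal, hgram, transpose_eq_one]

theorem exists_mul_conjTranspose_eq_one_and_rows_eq [Fintype ι] [DecidableEq κ]
    (f : ι ↪ κ) {X : Matrix ι κ 𝕜} (hX : X * Xᴴ = 1) :
    ∃ Q : Matrix κ κ 𝕜, Q * Qᴴ = 1 ∧ ∀ i, Q (f i) = X i := by
  obtain ⟨v, hvf⟩ : ∃ v : κ → EuclideanSpace 𝕜 κ, ∀ i, v (f i) = WithLp.toLp 2 (X i) :=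
    ⟨Function.extend f (fun i => WithLp.toLp 2 (X i)) 0, f.injective.extend_apply _ _⟩
  have hv : Orthonormal 𝕜 ((Set.range f).domRestrict v) := by
    convert (orthonormal_toLp_rows_iff.2 hX).comp _
      (Equiv.ofInjective f f.injective).symm.injective
    ext1 ⟨_, i, rfl⟩
    simp [hvf]
  obtain ⟨b, hb⟩ := hv.exists_orthonormalBasis_extension_of_card_eq (by simp)
  refine ⟨of fun k => (b k).ofLp, orthonormal_toLp_rows_iff.1 b.orthonormal, fun i => ?_⟩
  change (b (f i)).ofLp = X i
  rw [hb _ ⟨i, rfl⟩, hvf]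

end Matrix

theorem lattice_lifting_of_right_invertible_general {m n : ℕ} (hmn : m ≤ n)
    (G : Matrix (Fin m) (Fin m) ℤ) (s : ℕ) (hs : 0 < s)
    (L : Matrix (Fin m) (Fin n) ℤ) (R : Matrix (Fin n) (Fin m) ℤ) (hLR : L * R = 1)
    (hortho : (G.map (Int.cast : ℤ → ℝ) * L.map (Int.cast : ℤ → ℝ)) *
        (G.map (Int.cast : ℤ → ℝ) * L.map (Int.cast : ℤ → ℝ))ᵀ
      = ((s : ℝ) ^ 2) • (1 : Matrix (Fin m) (Fin m) ℝ)) :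
    ∃ Q : Matrix (Fin n) (Fin n) ℝ, Q * Qᵀ = 1 ∧
      (Set.range fun c : Fin n → ℤ => fun i : Fin m =>
          (s : ℝ) * Q.mulVec (fun j => (c j : ℝ)) (Fin.castLE hmn i))
        = Set.range fun c : Fin m → ℤ =>
            (G.map (Int.cast : ℤ → ℝ)).mulVec fun i => (c i : ℝ) := by
  set A := G.map (Int.cast : ℤ → ℝ) * L.map (Int.cast : ℤ → ℝ)
  have hs0 : (s : ℝ) ≠ 0 := Nat.cast_ne_zero.2 hs.ne'
  have hX : ((s : ℝ)⁻¹ • A) * ((s : ℝ)⁻¹ • A)ᴴ = 1 := by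
    rw [conjTranspose_eq_transpose_of_trivial, transpose_smul, smul_mul, Matrix.mul_smul,
      hortho, smul_smul, smul_smul, show (s : ℝ)⁻¹ * (s : ℝ)⁻¹ * (s : ℝ) ^ 2 = 1 by field_simp,
      one_smul]
  obtain ⟨Q, hQ, hrows⟩ := exists_mul_conjTranspose_eq_one_and_rows_eq (Fin.castLEEmb hmn) hX
  refine ⟨Q, by rwa [← conjTranspose_eq_transpose_of_trivial], ?_⟩
  have hlift : (fun c : Fin n → ℤ => fun i : Fin m =>
        (s : ℝ) * Q.mulVec (fun j => (c j : ℝ)) (Fin.castLE hmn i))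
      = (fun d : Fin m → ℤ => (G.map (Int.cast : ℤ → ℝ)).mulVec fun i => (d i : ℝ)) ∘
          L.mulVec := by
    ext c i
    have hrow : (Q *ᵥ fun j => (c j : ℝ)) (Fin.castLE hmn i)
        = (((s : ℝ)⁻¹ • A) *ᵥ fun j => (c j : ℝ)) i := by
      simp only [mulVec, ← hrows]
      rfl
    rw [hrow, smul_mulVec, Pi.smul_apply, smul_eq_mul, mul_inv_cancel_left₀ hs0,
      ← mulVec_mulVec, Function.comp_apply]
    congr 1
    ext j
    exact ((Int.castRingHom ℝ).map_mulVec L c j).symm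
  rw [hlift, (mulVec_surjective_iff_exists_right_inverse.2 ⟨R, hLR⟩).range_comp]

/-- Lattice lifting (sufficiency): let `𝓛 = G(ℤ^m)` with `G ∈ ℤ^{m×m}`, `det G ≠ 0`,
`m ≤ n`, `s > 0`. If there is `L ∈ ℤ^{m×n}` right-invertible over `ℤ` with
`(GL)(GL)ᵀ = s² I_m`, then there is a lattice `L' = Q(ℤ^n)` generated by an
orthonormal basis (the columns of an orthogonal matrix `Q`) with `𝓛 = s·P(L')`,
where `P` is the orthogonal projection onto the first `m` coordinates. -/
theorem lattice_lifting_of_right_invertible {m n : ℕ} (hmn : m ≤ n)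
    (G : Matrix (Fin m) (Fin m) ℤ) (hG : G.det ≠ 0) (s : ℕ) (hs : 0 < s)
    (L : Matrix (Fin m) (Fin n) ℤ) (R : Matrix (Fin n) (Fin m) ℤ) (hLR : L * R = 1)
    (hortho : (G.map (Int.cast : ℤ → ℝ) * L.map (Int.cast : ℤ → ℝ)) *
        (G.map (Int.cast : ℤ → ℝ) * L.map (Int.cast : ℤ → ℝ))ᵀ
      = ((s : ℝ) ^ 2) • (1 : Matrix (Fin m) (Fin m) ℝ)) :
    ∃ Q : Matrix (Fin n) (Fin n) ℝ, Q * Qᵀ = 1 ∧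
      (Set.range fun c : Fin n → ℤ => fun i : Fin m =>
          (s : ℝ) * Q.mulVec (fun j => (c j : ℝ)) (Fin.castLE hmn i))
        = Set.range fun c : Fin m → ℤ =>
            (G.map (Int.cast : ℤ → ℝ)).mulVec fun i => (c i : ℝ) :=
  lattice_lifting_of_right_invertible_general hmn G s hs L R hLR hortho
end

section
/- Conversely to the lifting direction: let L ⊂ ℝ^m be a lattice generated by the columns of G ∈ ℤ^{m×m} with det G ≠ 0, n ≥ m, s a positive integer, and suppose there is a lattice L' ⊂ ℝ^n generated by an orthonormal basis such that L = s·P(L'), where P is the orthogonal projection onto the first m coordinates. Then there exists a matrix L ∈ ℤ^{m×n}, right-invertible over ℤ, with (GL)(GL)^T = s²·I_m. -/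
/-!
Let `U` be the first `m` rows of `Q`, so `U Uᵀ = 1`. The two inclusions of `s U ℤⁿ = G ℤᵐ`,
tested on generators, give integer matrices with `G L = s U` and `s U R = G`. Hence
`G L R = G`, so `L R = 1` because `G` is invertible over `ℝ`, and
`(G L)(G L)ᵀ = s² U Uᵀ = s² I`.
-/

open Matrix

variable {K : Type*} {m n k : Type*}

def intLattice [Ring K] [Fintype n] (A : Matrix m n K) : Set (m → K) :=
  Set.range fun c : n → ℤ => A *ᵥ fun j => (c j : K)

theorem col_mem_intLattice [Ring K] [Fintype n] [DecidableEq n] (A : Matrix m n K) (j : n) :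
    A.col j ∈ intLattice A :=
  ⟨Pi.single j 1, by ext i; simp [mulVec, dotProduct, Pi.single_apply]⟩

theorem exists_mul_intCast_eq_of_intLattice_subset [Ring K] [Fintype n] [DecidableEq n]
    [Fintype k] {A : Matrix m n K} {B : Matrix m k K} (h : intLattice A ⊆ intLattice B) :
    ∃ L : Matrix k n ℤ, B * L.map (Int.cast : ℤ → K) = A := by
  choose c hc using fun j => h (col_mem_intLattice A j)
  refine ⟨of fun i j => c j i, ?_⟩
  ext i j
  simpa [mul_apply, mulVec, dotProduct] using congrFun (hc j) i

theorem exists_mul_intCast_eq_and_rightInverse_of_intLattice_eq [Field K] [CharZero K]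
    [Fintype m] [DecidableEq m] [Fintype n] [DecidableEq n] {A : Matrix m n K}
    {G : Matrix m m ℤ} (hG : G.det ≠ 0) (h : intLattice A = intLattice (G.map Int.cast)) :
    ∃ L : Matrix m n ℤ, G.map (Int.cast : ℤ → K) * L.map (Int.cast : ℤ → K) = A ∧
      ∃ R : Matrix n m ℤ, L * R = 1 := by
  obtain ⟨L, hGL⟩ := exists_mul_intCast_eq_of_intLattice_subset h.subset
  obtain ⟨R, hAR⟩ := exists_mul_intCast_eq_of_intLattice_subset h.symm.subset
  have hGunit : IsUnit (G.map (Int.cast : ℤ → K)) := by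
    rw [isUnit_iff_isUnit_det, isUnit_iff_ne_zero, ← Int.cast_det]
    exact_mod_cast hG
  have hLR : L.map (Int.cast : ℤ → K) * R.map (Int.cast : ℤ → K) = 1 := by
    apply hGunit.mul_left_cancel
    rw [← Matrix.mul_assoc, hGL, hAR, Matrix.mul_one]
  refine ⟨L, hGL, R, Matrix.map_injective (f := (Int.cast : ℤ → K)) Int.cast_injective ?_⟩
  dsimp only
  rw [Matrix.map_one _ Int.cast_zero Int.cast_one]
  exact (Matrix.map_mul (L := L) (M := R) (f := Int.castRingHom K)).trans hLR

theorem submatrix_mul_transpose_eq_one [CommRing K] [Fintype n] [DecidableEq m]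
    [DecidableEq n] {Q : Matrix n n K} (hQ : Q * Qᵀ = 1) {f : m → n}
    (hf : Function.Injective f) :
    Q.submatrix f id * (Q.submatrix f id)ᵀ = 1 := by
  rw [transpose_submatrix, ← submatrix_mul _ _ _ _ _ Function.bijective_id, hQ,
    submatrix_one _ hf]

theorem right_invertible_of_lattice_lifting_general {m n : ℕ} (hmn : m ≤ n)
    (G : Matrix (Fin m) (Fin m) ℤ) (hG : G.det ≠ 0) (s : ℕ)
    (Q : Matrix (Fin n) (Fin n) ℝ) (hQ : Q * Qᵀ = 1)
    (hproj : (Set.range fun c : Fin n → ℤ => fun i : Fin m =>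
          (s : ℝ) * Q.mulVec (fun j => (c j : ℝ)) (Fin.castLE hmn i))
        = Set.range fun c : Fin m → ℤ =>
            (G.map (Int.cast : ℤ → ℝ)).mulVec fun i => (c i : ℝ)) :
    ∃ (L : Matrix (Fin m) (Fin n) ℤ) (R : Matrix (Fin n) (Fin m) ℤ),
      L * R = 1 ∧
      (G.map (Int.cast : ℤ → ℝ) * L.map (Int.cast : ℤ → ℝ)) *
          (G.map (Int.cast : ℤ → ℝ) * L.map (Int.cast : ℤ → ℝ))ᵀ
        = ((s : ℝ) ^ 2) • (1 : Matrix (Fin m) (Fin m) ℝ) := by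
  set U := Q.submatrix (Fin.castLE hmn) id
  have hU : U * Uᵀ = 1 := submatrix_mul_transpose_eq_one hQ (Fin.castLE_injective hmn)
  have hlat : intLattice ((s : ℝ) • U) = intLattice (G.map Int.cast) := by
    rw [intLattice, intLattice, ← hproj]
    congr! 2 with c
    ext i
    simp [U, mulVec, dotProduct, Finset.mul_sum, mul_assoc]
  obtain ⟨L, hGL, R, hLR⟩ := exists_mul_intCast_eq_and_rightInverse_of_intLattice_eq hG hlat
  refine ⟨L, R, hLR, ?_⟩
  rw [hGL, transpose_smul, Matrix.smul_mul, Matrix.mul_smul, hU, smul_smul, sq]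

/-- Lattice lifting (necessity): let `𝓛 = G(ℤ^m)` with `G ∈ ℤ^{m×m}`, `det G ≠ 0`,
`m ≤ n`, `s > 0`. If there is a lattice `L' = Q(ℤ^n)` generated by an orthonormal
basis (the columns of an orthogonal matrix `Q`) with `𝓛 = s·P(L')`, where `P` is the
orthogonal projection onto the first `m` coordinates, then there is a matrix
`L ∈ ℤ^{m×n}`, right-invertible over `ℤ`, with `(GL)(GL)ᵀ = s² I_m`. -/
theorem right_invertible_of_lattice_lifting {m n : ℕ} (hmn : m ≤ n)
    (G : Matrix (Fin m) (Fin m) ℤ) (hG : G.det ≠ 0) (s : ℕ) (hs : 0 < s)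
    (Q : Matrix (Fin n) (Fin n) ℝ) (hQ : Q * Qᵀ = 1)
    (hproj : (Set.range fun c : Fin n → ℤ => fun i : Fin m =>
          (s : ℝ) * Q.mulVec (fun j => (c j : ℝ)) (Fin.castLE hmn i))
        = Set.range fun c : Fin m → ℤ =>
            (G.map (Int.cast : ℤ → ℝ)).mulVec fun i => (c i : ℝ)) :
    ∃ (L : Matrix (Fin m) (Fin n) ℤ) (R : Matrix (Fin n) (Fin m) ℤ),
      L * R = 1 ∧
      (G.map (Int.cast : ℤ → ℝ) * L.map (Int.cast : ℤ → ℝ)) *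
          (G.map (Int.cast : ℤ → ℝ) * L.map (Int.cast : ℤ → ℝ))ᵀ
        = ((s : ℝ) ^ 2) • (1 : Matrix (Fin m) (Fin m) ℝ) :=
  right_invertible_of_lattice_lifting_general hmn G hG s Q hQ hproj
end
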